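/- Let h : X → Y with Y finite, x ∼ D on a finite set, and suppose g is (ε,α)-complete with respect to h: every ḡ with I(g(x,h(x)); ḡ(x)) ≤ ε and every s satisfy ℙ[s(ḡ(x)) ≠ h(x)] ≥ α. Then for any random variable e(x) (a function of x) with I(e(x); g(x,h(x))) ≤ ε, we have I(e(x); h(x)) ≤ log₂(1-α) + H(h(x)). -/

import Mathlib

open scoped Classical

/-- Probability of an event under distribution `D` on a finite sample space. -/
noncomputable def pr {Ω : Type*} [Fintype Ω] (D : Ω → ℝ) (p : Ω → Prop) : ℝ :=
  ∑ x, if p x then D x else 0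

/-- Shannon entropy (base 2) of a random variable `f` under `D`. -/
noncomputable def ent {Ω A : Type*} [Fintype Ω] (D : Ω → ℝ) (f : Ω → A) : ℝ :=
  -∑ a ∈ Finset.image f Finset.univ,
      pr D (fun x => f x = a) * Real.logb 2 (pr D (fun x => f x = a))

/-- Mutual information (base 2) between random variables `f` and `g` under `D`. -/
noncomputable def mi {Ω A B : Type*} [Fintype Ω] (D : Ω → ℝ) (f : Ω → A) (g : Ω → B) : ℝ :=
  ent D f + ent D g - ent D (fun x => (f x, g x))

/-- Binary entropy function (base 2). -/
noncomputable def binEnt (p : ℝ) : ℝ := -(p * Real.logb 2 p) - (1 - p) * Real.logb 2 (1 - p)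

/-- `D` is a probability distribution. -/
def IsProb {Ω : Type*} [Fintype Ω] (D : Ω → ℝ) : Prop :=
  (∀ x, 0 ≤ D x) ∧ ∑ x, D x = 1

section Aux

variable {Ω : Type*} [Fintype Ω] {D : Ω → ℝ}

lemma pr_congr {p q : Ω → Prop} (h : ∀ x, p x ↔ q x) : pr D p = pr D q := by
  unfold pr; exact Finset.sum_congr rfl fun x _ => by rw [if_congr (h x) rfl rfl]

lemma pr_nonneg (hD : ∀ x, 0 ≤ D x) (p : Ω → Prop) : 0 ≤ pr D p :=
  Finset.sum_nonneg fun x _ => by by_cases hx : p x <;> simp [hx, hD x]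

lemma pr_mono (hD : ∀ x, 0 ≤ D x) {p q : Ω → Prop} (h : ∀ x, p x → q x) :
    pr D p ≤ pr D q := by
  refine Finset.sum_le_sum fun x _ => ?_
  by_cases hx : p x
  · simp [hx, h x hx]
  · by_cases hq : q x <;> simp [hx, hq, hD x]

lemma pr_not (hD : IsProb D) (p : Ω → Prop) : pr D (fun x => ¬ p x) = 1 - pr D p := by
  unfold pr
  rw [← hD.2, ← Finset.sum_sub_distrib]
  refine Finset.sum_congr rfl fun x _ => ?_
  by_cases hx : p x <;> simp [hx]

/-- entropy can be computed over any superset of the image. -/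
lemma ent_eq_sum_superset {A : Type*} (f : Ω → A) (S : Finset A)
    (hS : ∀ x : Ω, f x ∈ S) :
    ent D f = -∑ a ∈ S,
      pr D (fun x => f x = a) * Real.logb 2 (pr D (fun x => f x = a)) := by
  unfold ent
  congr 1
  refine Finset.sum_subset (fun a ha => ?_) fun a _ ha => ?_
  · obtain ⟨x, -, rfl⟩ := Finset.mem_image.1 ha
    exact hS x
  · have h0 : pr D (fun x => f x = a) = 0 := by
      refine Finset.sum_eq_zero fun x _ => ?_
      have : f x ≠ a := fun hfa => ha (Finset.mem_image.2 ⟨x, Finset.mem_univ x, hfa⟩)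
      simp [this]
    simp [h0]

lemma ent_pair_comm {A B : Type*} (f : Ω → A) (g : Ω → B) :
    ent D (fun x => (f x, g x)) = ent D (fun x => (g x, f x)) := by
  have h1 : ∀ x : Ω, (f x, g x) ∈ (Finset.image f Finset.univ) ×ˢ (Finset.image g Finset.univ) :=
    fun x => Finset.mem_product.2 ⟨Finset.mem_image.2 ⟨x, Finset.mem_univ x, rfl⟩,
      Finset.mem_image.2 ⟨x, Finset.mem_univ x, rfl⟩⟩
  have h2 : ∀ x : Ω, (g x, f x) ∈ (Finset.image g Finset.univ) ×ˢ (Finset.image f Finset.univ) :=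
    fun x => Finset.mem_product.2 ⟨Finset.mem_image.2 ⟨x, Finset.mem_univ x, rfl⟩,
      Finset.mem_image.2 ⟨x, Finset.mem_univ x, rfl⟩⟩
  rw [ent_eq_sum_superset _ _ h1, ent_eq_sum_superset _ _ h2,
    Finset.sum_product, Finset.sum_product, Finset.sum_comm]
  congr 1
  refine Finset.sum_congr rfl fun b _ => Finset.sum_congr rfl fun a _ => ?_
  have : pr D (fun x => (f x, g x) = (a, b)) = pr D (fun x => (g x, f x) = (b, a)) :=
    pr_congr fun x => by simp [Prod.ext_iff, and_comm]
  rw [this]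

lemma mi_comm {A B : Type*} (f : Ω → A) (g : Ω → B) : mi D f g = mi D g f := by
  unfold mi
  rw [ent_pair_comm]
  ring

end Aux

/-- If `g` is `(ε,α)`-complete with respect to `h`, then any side variable `e(x)` with
`I(e; g(x,h(x))) ≤ ε` satisfies `I(e; h(x)) ≤ log₂(1-α) + H(h(x))`. -/
theorem complete_ef_mi_bound {Ω Y G : Type*} [Fintype Ω] [Fintype Y] (D : Ω → ℝ)
    (hD : IsProb D) (h : Ω → Y) (g : Ω → Y → G) (ε α : ℝ)
    (hcomplete : ∀ (d : ℕ) (gbar : Ω → EuclideanSpace ℝ (Fin d)) (s : EuclideanSpace ℝ (Fin d) → Y),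
      mi D (fun x => g x (h x)) gbar ≤ ε → α ≤ pr D (fun x => s (gbar x) ≠ h x))
    (d : ℕ) (e : Ω → EuclideanSpace ℝ (Fin d))
    (he : mi D e (fun x => g x (h x)) ≤ ε) :
    mi D e h ≤ Real.logb 2 (1 - α) + ent D h := by
  obtain ⟨hD0, hD1⟩ := hD
  have hΩ : Nonempty Ω := by
    by_contra hne
    rw [not_nonempty_iff] at hne
    rw [Finset.univ_eq_empty, Finset.sum_empty] at hD1
    norm_num at hD1
  have hY : Nonempty Y := ⟨h (Classical.arbitrary Ω)⟩
  -- joint and marginal probabilities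
  set p : EuclideanSpace ℝ (Fin d) → Y → ℝ :=
    fun v y => pr D (fun x => e x = v ∧ h x = y) with hpdef
  set P : EuclideanSpace ℝ (Fin d) → ℝ := fun v => pr D (fun x => e x = v) with hPdef
  set T : Finset (EuclideanSpace ℝ (Fin d)) := Finset.image e Finset.univ with hTdef
  -- the max-likelihood decoder
  have hmax : ∀ v : EuclideanSpace ℝ (Fin d), ∃ y : Y, ∀ y', p v y' ≤ p v y := by
    intro v
    obtain ⟨y, -, hy⟩ := Finset.exists_max_image Finset.univ (fun y => p v y)
      ⟨Classical.arbitrary Y, Finset.mem_univ _⟩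
    exact ⟨y, fun y' => hy y' (Finset.mem_univ _)⟩
  choose s hs using hmax
  set M : ℝ := ∑ v ∈ T, p v (s v) with hMdef
  -- basic facts
  have hp_nonneg : ∀ v y, 0 ≤ p v y := fun v y => pr_nonneg hD0 _
  have hp_le_P : ∀ v y, p v y ≤ P v := fun v y => pr_mono hD0 fun x hx => hx.1
  have hP_nonneg : ∀ v, 0 ≤ P v := fun v => pr_nonneg hD0 _
  have hP_eq : ∀ v, P v = ∑ y : Y, p v y := by
    intro v
    simp only [hPdef, hpdef, pr]
    rw [Finset.sum_comm]
    refine Finset.sum_congr rfl fun x _ => ?_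
    by_cases hx : e x = v
    · simp [hx]
    · simp [hx]
  have hfiber : ∀ F : Ω → ℝ, ∑ x, F x = ∑ v ∈ T, ∑ x, if e x = v then F x else 0 := by
    intro F
    rw [← Finset.sum_fiberwise_of_maps_to (g := e) (t := T)
      (fun x _ => Finset.mem_image.2 ⟨x, Finset.mem_univ x, rfl⟩) F]
    exact Finset.sum_congr rfl fun v _ => by rw [Finset.sum_filter]
  have hP_sum : ∑ v ∈ T, P v = 1 := by
    rw [← hD1, hfiber D]
    simp only [hPdef, pr]
    convert rfl
  -- the decoder error probability
  have herr : pr D (fun x => s (e x) ≠ h x) = 1 - M := by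
    have h1 : pr D (fun x => s (e x) = h x) = M := by
      simp only [pr, hMdef, hpdef, pr]
      rw [hfiber (fun x => if s (e x) = h x then D x else 0)]
      refine Finset.sum_congr rfl fun v _ => Finset.sum_congr rfl fun x _ => ?_
      by_cases hx : e x = v
      · subst hx
        by_cases hy : h x = s (e x)
        · simp [hy]
        · simp [hy, Ne.symm hy]
      · simp [hx]
    have := pr_not ⟨hD0, hD1⟩ (fun x => s (e x) = h x)
    rw [h1] at this
    exact this
  have hα : α ≤ 1 - M := herr ▸ hcomplete d e s (by rw [mi_comm]; exact he)
  -- M is positive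
  have hM_pos : 0 < M := by
    have hcard : 0 < (Fintype.card Y : ℝ) := by
      have := Fintype.card_pos (α := Y)
      exact_mod_cast this
    have h1 : (1 : ℝ) ≤ (Fintype.card Y : ℝ) * M := by
      calc (1 : ℝ) = ∑ v ∈ T, P v := hP_sum.symm
        _ ≤ ∑ v ∈ T, (Fintype.card Y : ℝ) * p v (s v) := by
            refine Finset.sum_le_sum fun v _ => ?_
            rw [hP_eq v]
            calc ∑ y : Y, p v y ≤ ∑ _y : Y, p v (s v) :=
                  Finset.sum_le_sum fun y _ => hs v y
              _ = (Fintype.card Y : ℝ) * p v (s v) := by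
                  rw [Finset.sum_const, Finset.card_univ, nsmul_eq_mul]
        _ = (Fintype.card Y : ℝ) * M := by rw [hMdef, Finset.mul_sum]
    nlinarith
  have hαM : M ≤ 1 - α := by linarith
  have hα1 : 0 < 1 - α := lt_of_lt_of_le hM_pos hαM
  -- key entropy inequality : H(e) - H(e,h) ≤ logb 2 M
  have hlog2 : (0 : ℝ) < Real.log 2 := Real.log_pos one_lt_two
  have hkey : ent D e - ent D (fun x => (e x, h x)) ≤ Real.logb 2 M := by
    have hpair_sub : ∀ x : Ω, (e x, h x) ∈ T ×ˢ (Finset.univ : Finset Y) :=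
      fun x => Finset.mem_product.2 ⟨Finset.mem_image.2 ⟨x, Finset.mem_univ x, rfl⟩,
        Finset.mem_univ _⟩
    have hent_pair : ent D (fun x => (e x, h x)) =
        -∑ v ∈ T, ∑ y : Y, p v y * Real.logb 2 (p v y) := by
      rw [ent_eq_sum_superset _ _ hpair_sub, Finset.sum_product]
      congr 1
      refine Finset.sum_congr rfl fun v _ => Finset.sum_congr rfl fun y _ => ?_
      have : pr D (fun x => (e x, h x) = (v, y)) = p v y :=
        pr_congr fun x => by simp [Prod.ext_iff]
      rw [this]
    have hent_e : ent D e = -∑ v ∈ T, P v * Real.logb 2 (P v) := by unfold ent; convert rfl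
    have hcore : ∑ v ∈ T, ∑ y : Y, p v y * Real.log (p v y)
        - ∑ v ∈ T, P v * Real.log (P v) ≤ Real.log M := by
      have hperv : ∀ v ∈ T,
          (∑ y : Y, p v y * Real.log (p v y)) - P v * Real.log (P v) - P v * Real.log M
            ≤ p v (s v) / M - P v := by
        intro v _
        rcases eq_or_lt_of_le (hP_nonneg v) with hP0 | hPpos
        · have hp0 : ∀ y, p v y = 0 := fun y =>
            le_antisymm ((hp_le_P v y).trans hP0.symm.le) (hp_nonneg v y)
          simp [hp0, ← hP0]
        · have hPlog : P v * Real.log (P v) = ∑ y : Y, p v y * Real.log (P v) := by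
            rw [← Finset.sum_mul, ← hP_eq]
          have hMlog : P v * Real.log M = ∑ y : Y, p v y * Real.log M := by
            rw [← Finset.sum_mul, ← hP_eq]
          rw [hPlog, hMlog, ← Finset.sum_sub_distrib, ← Finset.sum_sub_distrib]
          have hterm : ∀ y : Y,
              p v y * Real.log (p v y) - p v y * Real.log (P v) - p v y * Real.log M
                ≤ p v y * p v y / (P v * M) - p v y := by
            intro y
            rcases eq_or_lt_of_le (hp_nonneg v y) with hp0 | hppos
            · simp [← hp0]
            · have hPM : 0 < P v * M := mul_pos hPpos hM_pos
              have hlog : Real.log (p v y / (P v * M)) ≤ p v y / (P v * M) - 1 :=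
                Real.log_le_sub_one_of_pos (div_pos hppos hPM)
              rw [Real.log_div (ne_of_gt hppos) (ne_of_gt hPM),
                Real.log_mul (ne_of_gt hPpos) (ne_of_gt hM_pos)] at hlog
              have hmul := mul_le_mul_of_nonneg_left hlog (le_of_lt hppos)
              have hrw : p v y * (p v y / (P v * M) - 1) = p v y * p v y / (P v * M) - p v y := by
                ring
              nlinarith [hmul]
          calc (∑ y : Y, (p v y * Real.log (p v y) - p v y * Real.log (P v) - p v y * Real.log M))
              ≤ ∑ y : Y, (p v y * p v y / (P v * M) - p v y) :=
                Finset.sum_le_sum fun y _ => hterm y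
            _ ≤ p v (s v) / M - P v := by
                have hsq : ∑ y : Y, p v y * p v y ≤ p v (s v) * P v := by
                  rw [hP_eq, Finset.mul_sum]
                  exact Finset.sum_le_sum fun y _ =>
                    mul_le_mul_of_nonneg_right (hs v y) (hp_nonneg v y)
                rw [Finset.sum_sub_distrib]
                have h1 : ∑ y : Y, p v y * p v y / (P v * M) = (∑ y : Y, p v y * p v y) / (P v * M) := by
                  rw [Finset.sum_div]
                rw [h1, ← hP_eq]
                have h2 : (∑ y : Y, p v y * p v y) / (P v * M) ≤ p v (s v) / M := by
                  rw [div_le_div_iff₀ (mul_pos hPpos hM_pos) hM_pos]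
                  calc (∑ y : Y, p v y * p v y) * M ≤ (p v (s v) * P v) * M :=
                        mul_le_mul_of_nonneg_right hsq (le_of_lt hM_pos)
                    _ = p v (s v) * (P v * M) := by ring
                linarith
      have hsum := Finset.sum_le_sum hperv
      rw [Finset.sum_sub_distrib, Finset.sum_sub_distrib, ← Finset.sum_mul, hP_sum] at hsum
      have hM1 : ∑ v ∈ T, p v (s v) / M = 1 := by
        rw [← Finset.sum_div, ← hMdef, div_self (ne_of_gt hM_pos)]
      rw [Finset.sum_sub_distrib, hM1, hP_sum] at hsum
      linarith
    have heq : -∑ v ∈ T, P v * Real.logb 2 (P v)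
        - -∑ v ∈ T, ∑ y : Y, p v y * Real.logb 2 (p v y)
        = (∑ v ∈ T, ∑ y : Y, p v y * Real.log (p v y)
            - ∑ v ∈ T, P v * Real.log (P v)) / Real.log 2 := by
      simp only [Real.logb, ← mul_div_assoc, ← Finset.sum_div]
      ring
    rw [hent_pair, hent_e, heq, Real.logb]
    exact div_le_div_of_nonneg_right hcore hlog2.le
  have hmono : Real.logb 2 M ≤ Real.logb 2 (1 - α) :=
    (Real.logb_le_logb one_lt_two hM_pos hα1).2 hαM
  have : mi D e h = ent D e + ent D h - ent D (fun x => (e x, h x)) := rfl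
  rw [this]
  linarith
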